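/- Let W = {σ ∈ O(ℝ⁴) : σ((D₄)₂) = (D₄)₂} be the automorphism group of the D₄ root system. Then P₆ is a nonzero harmonic homogeneous polynomial of degree 6 satisfying P₆∘σ = P₆ for all σ ∈ W, and every harmonic homogeneous polynomial of degree 6 on ℝ⁴ that is invariant under W is a real scalar multiple of P₆ (the space of W-invariant degree-6 harmonics is one-dimensional, spanned by P₆). -/

import Mathlib

noncomputable section

/-- Standard Euclidean inner product on `ℝ^d`. -/
def dotp {d : ℕ} (x y : Fin d → ℝ) : ℝ := ∑ i, x i * y i

/-- A polynomial in `d` real variables is harmonic if its Laplacian vanishes. -/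
def IsHarmonic {d : ℕ} (P : MvPolynomial (Fin d) ℝ) : Prop :=
  ∑ i, MvPolynomial.pderiv i (MvPolynomial.pderiv i P) = 0

/-- `X ⊆ S^{d-1}` is a spherical design of harmonic index `T`:
for every `ℓ ∈ T` and every homogeneous harmonic polynomial `P` of degree `ℓ`,
the sum of `P` over `X` vanishes. -/
def IsSphDesign {d : ℕ} (T : Set ℕ) (X : Set (Fin d → ℝ)) : Prop :=
  ∀ ℓ ∈ T, ∀ P : MvPolynomial (Fin d) ℝ, P.IsHomogeneous ℓ → IsHarmonic P →
    ∑ᶠ x ∈ X, MvPolynomial.eval x P = 0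

/-- The `D₄` lattice: integer vectors in `ℝ⁴` with even coordinate sum. -/
def D4 : Set (Fin 4 → ℝ) :=
  {x | (∀ i, ∃ n : ℤ, x i = (n : ℝ)) ∧ ∃ k : ℤ, (∑ i, x i) = 2 * (k : ℝ)}

/-- The `m`-shell of the `D₄` lattice. -/
def D4shell (m : ℕ) : Set (Fin 4 → ℝ) := {x ∈ D4 | ∑ i, (x i) ^ 2 = (m : ℝ)}

/-- The normalized `N`-shell `(1/√N)·(D₄)_N` of the `D₄` lattice. -/
def normShell (N : ℕ) : Set (Fin 4 → ℝ) :=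
  (fun x => (Real.sqrt N)⁻¹ • x) '' D4shell N

/-- The degree-6 harmonic polynomial `P₆` spanning the `W(F₄)`-invariant harmonics. -/
def P6 : MvPolynomial (Fin 4) ℝ :=
  letI x : Fin 4 → MvPolynomial (Fin 4) ℝ := fun i => MvPolynomial.X i
  (x 0 ^ 6 + x 1 ^ 6 + x 2 ^ 6 + x 3 ^ 6)
    - 5 * (x 0 ^ 4 * (x 1 ^ 2 + x 2 ^ 2 + x 3 ^ 2)
        + x 0 ^ 2 * (x 1 ^ 4 + x 2 ^ 4 + x 3 ^ 4)
        + (x 1 ^ 4 + x 2 ^ 2 * x 3 ^ 2) * (x 2 ^ 2 + x 3 ^ 2)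
        + x 1 ^ 2 * (x 2 ^ 4 + x 3 ^ 4))
    + 30 * (x 0 ^ 2 * (x 1 ^ 2 * x 2 ^ 2 + x 1 ^ 2 * x 3 ^ 2 + x 2 ^ 2 * x 3 ^ 2)
        + x 1 ^ 2 * x 2 ^ 2 * x 3 ^ 2)

/-!
`P₆(v) = 5‖v‖⁶ - ⅓ ∑_α ⟨α, v⟩⁶`, the sum running over the 24 roots `α` of `D₄`, so every
orthogonal map permuting the roots fixes `P₆`.

Uniqueness only needs the sign changes and coordinate permutations, which preserve the roots.
A sextic invariant under them has only even exponents and coefficients symmetric in the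
variables, so it is `a ∑ xᵢ⁶ + b ∑ xᵢ⁴xⱼ² + c ∑ xᵢ²xⱼ²xₖ²`. Its Laplacian has coefficients
`30a + 6b` at `x₁⁴` and `24b + 4c` at `x₁²x₂²`, so a harmonic one is determined by `a`, its value
at `e₁`.
-/

open MvPolynomial

namespace MvPolynomial

variable {σ R : Type*}

@[simp]
theorem pderiv_ofNat [CommSemiring R] (i : σ) (n : ℕ) [n.AtLeastTwo] :
    pderiv i (ofNat(n) : MvPolynomial σ R) = 0 := by
  rw [← Nat.cast_ofNat]
  exact (pderiv i).map_natCast n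

theorem bind₁_update_neg_X_monomial [CommRing R] [DecidableEq σ] (i : σ) (s : σ →₀ ℕ) (a : R) :
    bind₁ (Function.update X i (-X i)) (monomial s a) = monomial s ((-1) ^ s i * a) := by
  have hX : ∀ j, Function.update (X : σ → MvPolynomial σ R) i (-X i) j
      = C (if j = i then -1 else 1) * X j := by
    intro j
    rcases eq_or_ne j i with rfl | h <;> simp [*]
  rw [bind₁_monomial, monomial_eq, Finsupp.prod]
  simp only [hX, mul_pow, Finset.prod_mul_distrib, ← map_pow, ← map_prod, ite_pow, one_pow,
    Finset.prod_ite_eq', C_mul]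
  split_ifs with h
  · ring
  · simp [Finsupp.notMem_support_iff.1 h]

theorem coeff_bind₁_update_neg_X [CommRing R] [DecidableEq σ] (i : σ) (Q : MvPolynomial σ R)
    (m : σ →₀ ℕ) :
    coeff m (bind₁ (Function.update X i (-X i)) Q) = (-1) ^ m i * coeff m Q := by
  induction Q using MvPolynomial.induction_on' with
  | add p q hp hq => simp [hp, hq, mul_add]
  | monomial s a =>
    rw [bind₁_update_neg_X_monomial, coeff_monomial, coeff_monomial]
    split_ifs with h <;> simp [h]

theorem IsHomogeneous.eval_piSingle_one [CommSemiring R] [Fintype σ] [DecidableEq σ]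
    {Q : MvPolynomial σ R} {n : ℕ} (hQ : Q.IsHomogeneous n) (i : σ) :
    eval (Pi.single i 1) Q = coeff (Finsupp.single i n) Q := by
  rw [eval_eq', Finset.sum_eq_single (Finsupp.single i n)]
  · simp [Finsupp.single_apply, Pi.single_apply]
  · intro d hd hne
    obtain ⟨j, hji, hj⟩ : ∃ j ≠ i, d j ≠ 0 := by
      by_contra! h
      have hd_eq : d = Finsupp.single i (d i) := by
        ext j
        rcases eq_or_ne j i with rfl | hj <;> simp [*]
      have hdeg := hQ (mem_support_iff.1 hd)
      rw [hd_eq] at hdeg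
      simp only [Finsupp.weight, LinearMap.toAddMonoidHom_coe, Finsupp.linearCombination_single,
        Pi.one_apply, smul_eq_mul, mul_one] at hdeg
      exact hne (hd_eq.trans (by rw [hdeg]))
    rw [Finset.prod_eq_zero (Finset.mem_univ j) (by simp [hji, hj]), mul_zero]
  · intro h
    simp [notMem_support_iff.1 h]

theorem coeff_eq_zero_of_eval_update_neg {K : Type*} [Field K] [CharZero K] [DecidableEq σ]
    {Q : MvPolynomial σ K} {i : σ} (hQ : ∀ v, eval (Function.update v i (-v i)) Q = eval v Q)
    {m : σ →₀ ℕ} (hm : Odd (m i)) : coeff m Q = 0 := by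
  have hbind : bind₁ (Function.update X i (-X i)) Q = Q := by
    refine MvPolynomial.funext fun v => ?_
    have hv : (fun j => eval v (Function.update X i (-X i) j)) = Function.update v i (-v i) := by
      ext j
      rcases eq_or_ne j i with rfl | h <;> simp [*]
    rw [← hQ v, ← hv]
    exact eval₂Hom_bind₁ (RingHom.id K) v _ Q
  have h := coeff_bind₁_update_neg_X i Q m
  rwa [hbind, hm.neg_one_pow, neg_one_mul, self_eq_neg] at h

theorem coeff_mapDomain_of_eval_comp {K : Type*} [Field K] [Infinite K] {Q : MvPolynomial σ K}
    {e : σ ≃ σ} (hQ : ∀ v, eval (v ∘ e) Q = eval v Q) (m : σ →₀ ℕ) :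
    coeff (m.mapDomain e) Q = coeff m Q := by
  have hrename : rename e Q = Q := MvPolynomial.funext fun v => by rw [eval_rename, hQ]
  simpa [hrename] using coeff_rename_mapDomain e e.injective Q m

end MvPolynomial

section Harmonic

variable {d : ℕ}

theorem IsHarmonic.sub {P Q : MvPolynomial (Fin d) ℝ} (hP : IsHarmonic P) (hQ : IsHarmonic Q) :
    IsHarmonic (P - Q) := by
  simp only [IsHarmonic, map_sub, Finset.sum_sub_distrib] at *
  rw [hP, hQ, sub_zero]

theorem IsHarmonic.smul {P : MvPolynomial (Fin d) ℝ} (hP : IsHarmonic P) (a : ℝ) :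
    IsHarmonic (a • P) := by
  simp only [IsHarmonic, Derivation.map_smul, ← Finset.smul_sum] at *
  rw [hP, smul_zero]

theorem IsHarmonic.sum_coeff_add_single_two {Q : MvPolynomial (Fin d) ℝ} (hQ : IsHarmonic Q)
    (m : Fin d →₀ ℕ) :
    ∑ i, ((m i + 1) * (m i + 2) : ℝ) * coeff (m + Finsupp.single i 2) Q = 0 := by
  have h := congrArg (coeff m) hQ
  simp only [coeff_sum, coeff_pderiv, coeff_zero] at h
  rw [← h]
  refine Finset.sum_congr rfl fun i _ => ?_
  rw [add_assoc, ← Finsupp.single_add]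
  simp only [Finsupp.add_apply, Finsupp.single_eq_same, Nat.cast_add, Nat.cast_one]
  ring

end Harmonic

section OrthogonalMaps

variable {d : ℕ}

theorem injective_of_dotp_map_map_eq {σ : (Fin d → ℝ) →ₗ[ℝ] (Fin d → ℝ)}
    (hσ : ∀ x y, dotp (σ x) (σ y) = dotp x y) : Function.Injective σ := by
  refine (injective_iff_map_eq_zero σ).2 fun x hx => dotProduct_self_eq_zero.1 ?_
  calc x ⬝ᵥ x = dotp (σ x) (σ x) := (hσ x x).symm
    _ = 0 := by simp [hx, dotp]

theorem sum_dotp_map_eq_of_image_eq {σ : (Fin d → ℝ) →ₗ[ℝ] (Fin d → ℝ)}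
    (hσ : ∀ x y, dotp (σ x) (σ y) = dotp x y) {S : Finset (Fin d → ℝ)} (hS : σ '' S = S)
    (g : ℝ → ℝ) (v : Fin d → ℝ) : ∑ x ∈ S, g (dotp x (σ v)) = ∑ x ∈ S, g (dotp x v) := by
  have hS' : S.image σ = S := Finset.coe_injective (by simpa using hS)
  conv_lhs => rw [← hS']
  rw [Finset.sum_image fun x _ y _ h => injective_of_dotp_map_map_eq hσ h]
  simp only [hσ]

def negCoord (i : Fin d) : (Fin d → ℝ) →ₗ[ℝ] (Fin d → ℝ) where
  toFun v := Function.update v i (-v i)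
  map_add' u v := by
    ext j
    rcases eq_or_ne j i with rfl | h <;> simp [*, add_comm]
  map_smul' a v := by
    ext j
    rcases eq_or_ne j i with rfl | h <;> simp [*]

theorem negCoord_apply (i : Fin d) (v : Fin d → ℝ) :
    negCoord i v = Function.update v i (-v i) := rfl

theorem negCoord_negCoord (i : Fin d) (v : Fin d → ℝ) : negCoord i (negCoord i v) = v := by
  ext j
  rcases eq_or_ne j i with rfl | h <;> simp [negCoord_apply, *]

theorem sq_negCoord_apply (i j : Fin d) (v : Fin d → ℝ) : negCoord i v j ^ 2 = v j ^ 2 := by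
  rcases eq_or_ne j i with rfl | h <;> simp [negCoord_apply, *]

theorem dotp_negCoord (i : Fin d) (x y : Fin d → ℝ) :
    dotp (negCoord i x) (negCoord i y) = dotp x y := by
  refine Finset.sum_congr rfl fun j _ => ?_
  rcases eq_or_ne j i with rfl | h <;> simp [negCoord_apply, *]

theorem dotp_funLeft (e : Equiv.Perm (Fin d)) (x y : Fin d → ℝ) :
    dotp (LinearMap.funLeft ℝ ℝ e x) (LinearMap.funLeft ℝ ℝ e y) = dotp x y :=
  Equiv.sum_comp e fun j => x j * y j

end OrthogonalMaps

def D4roots : Finset (Fin 4 → ℤ) :=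
  {![1,1,0,0], ![1,-1,0,0], ![-1,1,0,0], ![-1,-1,0,0],
   ![1,0,1,0], ![1,0,-1,0], ![-1,0,1,0], ![-1,0,-1,0],
   ![1,0,0,1], ![1,0,0,-1], ![-1,0,0,1], ![-1,0,0,-1],
   ![0,1,1,0], ![0,1,-1,0], ![0,-1,1,0], ![0,-1,-1,0],
   ![0,1,0,1], ![0,1,0,-1], ![0,-1,0,1], ![0,-1,0,-1],
   ![0,0,1,1], ![0,0,1,-1], ![0,0,-1,1], ![0,0,-1,-1]}

theorem mem_D4roots_iff {n : Fin 4 → ℤ} : n ∈ D4roots ↔ ∑ i, n i ^ 2 = 2 := by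
  constructor
  · revert n
    decide
  · intro hn
    have hbound : n ∈ Fintype.piFinset fun _ => Finset.Icc (-1) 1 := by
      simp only [Fintype.mem_piFinset, Finset.mem_Icc]
      intro i
      have := Finset.single_le_sum (fun j _ => sq_nonneg (n j)) (Finset.mem_univ i)
      constructor <;> nlinarith
    have hcases : ∀ n ∈ Fintype.piFinset fun _ : Fin 4 => Finset.Icc (-1 : ℤ) 1,
        ∑ i, n i ^ 2 = 2 → n ∈ D4roots := by
      decide
    exact hcases n hbound hn

theorem even_sum_of_mem_D4roots : ∀ n ∈ D4roots, Even (∑ i, n i) := by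
  decide

theorem D4shell_two_eq_image_D4roots : D4shell 2 = D4roots.image (fun n i => (n i : ℝ)) := by
  ext x
  simp only [D4shell, D4, Finset.coe_image, Set.mem_image, Finset.mem_coe, Set.mem_ofPred_eq]
  constructor
  · rintro ⟨⟨hint, -⟩, hsq⟩
    choose n hn using hint
    refine ⟨n, mem_D4roots_iff.2 ?_, (funext hn).symm⟩
    simp only [hn] at hsq
    exact_mod_cast hsq
  · rintro ⟨n, hn, rfl⟩
    obtain ⟨k, hk⟩ := even_sum_of_mem_D4roots n hn
    refine ⟨⟨fun i => ⟨n i, rfl⟩, k, ?_⟩, ?_⟩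
    · show ∑ i, (n i : ℝ) = 2 * (k : ℝ)
      exact_mod_cast hk.trans (two_mul k).symm
    · show ∑ i, (n i : ℝ) ^ 2 = ((2 : ℕ) : ℝ)
      exact_mod_cast mem_D4roots_iff.1 hn

theorem negCoord_mem_D4shell {m : ℕ} (i : Fin 4) {x : Fin 4 → ℝ} (hx : x ∈ D4shell m) :
    negCoord i x ∈ D4shell m := by
  obtain ⟨⟨hint, k, hk⟩, hsq⟩ := hx
  obtain ⟨n, hn⟩ := hint i
  refine ⟨⟨fun j => ?_, k - n, ?_⟩, ?_⟩
  · obtain ⟨n', hn'⟩ := hint j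
    rcases eq_or_ne j i with rfl | h
    · exact ⟨-n', by simp [negCoord_apply, hn']⟩
    · exact ⟨n', by simp [negCoord_apply, h, hn']⟩
  · rw [negCoord_apply, Finset.sum_update_of_mem (Finset.mem_univ i),
      Finset.sdiff_singleton_eq_erase]
    rw [← Finset.add_sum_erase _ _ (Finset.mem_univ i)] at hk
    push_cast
    linarith
  · simp only [sq_negCoord_apply, hsq]

theorem funLeft_mem_D4shell {m : ℕ} (e : Equiv.Perm (Fin 4)) {x : Fin 4 → ℝ}
    (hx : x ∈ D4shell m) : LinearMap.funLeft ℝ ℝ e x ∈ D4shell m := by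
  obtain ⟨⟨hint, k, hk⟩, hsq⟩ := hx
  refine ⟨⟨fun j => hint (e j), k, ?_⟩, ?_⟩
  · rw [← hk]
    exact Equiv.sum_comp e x
  · rw [← hsq]
    exact Equiv.sum_comp e fun j => x j ^ 2

theorem image_negCoord_D4shell (m : ℕ) (i : Fin 4) : negCoord i '' D4shell m = D4shell m :=
  (Set.MapsTo.image_subset fun _ => negCoord_mem_D4shell i).antisymm
    (Set.LeftInvOn.surjOn (fun x _ => negCoord_negCoord i x) fun _ => negCoord_mem_D4shell i)

theorem image_funLeft_D4shell (m : ℕ) (e : Equiv.Perm (Fin 4)) :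
    LinearMap.funLeft ℝ ℝ e '' D4shell m = D4shell m :=
  (Set.MapsTo.image_subset fun _ => funLeft_mem_D4shell e).antisymm
    (Set.LeftInvOn.surjOn (fun x _ => by ext j; simp [LinearMap.funLeft_apply])
      fun _ => funLeft_mem_D4shell e.symm)

theorem P6_eq_sum_D4roots : P6 = C 5 * (∑ i, X i ^ 2) ^ 3
    - C (1 / 3) * ∑ n ∈ D4roots, (∑ i, C (n i : ℝ) * X i) ^ 6 := by
  refine MvPolynomial.funext fun v => ?_
  simp only [P6, D4roots, map_add, map_sub, map_mul, map_pow, map_neg, map_intCast, eval_X,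
    eval_C, eval_ofNat, Fin.sum_univ_four, Finset.mem_insert, Finset.mem_singleton,
    Matrix.vecCons_inj, Int.reduceNeg, reduceCtorEq, and_true, and_false, and_self, or_self,
    one_ne_zero, zero_ne_one, zero_eq_neg, not_false_eq_true, Finset.sum_insert,
    Finset.sum_singleton, Matrix.cons_val_zero, Matrix.cons_val_one, Matrix.cons_val,
    Int.cast_one, Int.cast_zero, Int.cast_neg, one_mul, neg_mul, zero_mul, add_zero, zero_add]
  ring

theorem eval_P6 (v : Fin 4 → ℝ) : eval v P6 = 5 * dotp v v ^ 3
    - 1 / 3 * ∑ x ∈ D4roots.image (fun n i => (n i : ℝ)), dotp x v ^ 6 := by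
  have hinj : Function.Injective fun (n : Fin 4 → ℤ) i => (n i : ℝ) :=
    fun n m h => funext fun i => by simpa using congrFun h i
  rw [P6_eq_sum_D4roots, Finset.sum_image fun n _ m _ h => hinj h]
  simp [dotp, sq]

theorem eval_P6_map {σ : (Fin 4 → ℝ) →ₗ[ℝ] (Fin 4 → ℝ)}
    (hσ : ∀ x y, dotp (σ x) (σ y) = dotp x y) (hshell : σ '' D4shell 2 = D4shell 2)
    (v : Fin 4 → ℝ) : eval (σ v) P6 = eval v P6 := by
  rw [D4shell_two_eq_image_D4roots] at hshell
  rw [eval_P6, eval_P6, hσ, sum_dotp_map_eq_of_image_eq hσ hshell (· ^ 6)]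

theorem isHomogeneous_P6 : P6.IsHomogeneous 6 := by
  rw [P6_eq_sum_D4roots]
  refine IsHomogeneous.sub ?_ ?_
  · exact ((IsHomogeneous.sum _ _ 2 fun i _ => isHomogeneous_X_pow i 2).pow 3).C_mul 5
  · refine (IsHomogeneous.sum _ _ 6 fun n _ => ?_).C_mul _
    simpa using (IsHomogeneous.sum _ _ 1 fun i _ => isHomogeneous_C_mul_X (n i : ℝ) i).pow 6

theorem isHarmonic_P6 : IsHarmonic P6 := by
  simp only [IsHarmonic, P6, Fin.sum_univ_four, map_add, map_sub, Derivation.leibniz_pow,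
    Derivation.leibniz, pderiv_X, pderiv_ofNat, Pi.single_apply, Fin.reduceEq, ↓reduceIte,
    Nat.add_one_sub_one, Nat.cast_ofNat, pow_one, smul_eq_mul, nsmul_eq_mul, smul_ite,
    mul_ite, mul_one, mul_zero, zero_mul, add_zero, zero_add, map_zero]
  ring

theorem eval_piSingle_P6 : eval (Pi.single 0 1) P6 = 1 := by
  simp [P6]

theorem exists_perm_comp_eq_of_even_of_sum_eq_six (k : Fin 4 → ℕ) (heven : ∀ i, Even (k i))
    (hsum : ∑ i, k i = 6) :
    ∃ e : Equiv.Perm (Fin 4), k ∘ e = ![6,0,0,0] ∨ k ∘ e = ![4,2,0,0] ∨ k ∘ e = ![2,2,2,0] := by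
  have hbound : k ∈ Fintype.piFinset fun _ => Finset.range 7 := by
    simp only [Fintype.mem_piFinset, Finset.mem_range]
    intro i
    have := Finset.single_le_sum (fun j _ => Nat.zero_le (k j)) (Finset.mem_univ i)
    omega
  have hcases : ∀ k ∈ Fintype.piFinset (fun _ : Fin 4 => Finset.range 7),
      (∀ i, Even (k i)) → ∑ i, k i = 6 → ∃ e : Equiv.Perm (Fin 4),
        k ∘ e = ![6,0,0,0] ∨ k ∘ e = ![4,2,0,0] ∨ k ∘ e = ![2,2,2,0] := by
    set_option maxRecDepth 10000 in decide
  exact hcases k hbound heven hsum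

theorem eq_zero_of_sextic_harmonic_relations (c : (Fin 4 → ℕ) → ℝ)
    (hodd : ∀ (k : Fin 4 → ℕ) i, Odd (k i) → c k = 0)
    (hperm : ∀ (k : Fin 4 → ℕ) (e : Equiv.Perm (Fin 4)), c (k ∘ e) = c k)
    (hharm : ∀ k : Fin 4 → ℕ, ∑ i, ((k i + 1) * (k i + 2) : ℝ) * c (k + Pi.single i 2) = 0)
    (h6 : c ![6,0,0,0] = 0) (k : Fin 4 → ℕ) (hk : ∑ i, k i = 6) : c k = 0 := by
  have horbit : ∀ k k' : Fin 4 → ℕ, (∃ e : Equiv.Perm (Fin 4), k ∘ e = k') → c k' = c k := by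
    rintro k _ ⟨e, rfl⟩
    exact hperm k e
  have h42 : c ![4,2,0,0] = 0 := by
    have h := hharm ![4,0,0,0]
    simp only [Fin.sum_univ_four, Matrix.cons_add, Matrix.empty_add_empty, Pi.single_apply,
      Matrix.vecHead, Matrix.vecTail, Function.comp_apply, Fin.succ_zero_eq_one, Fin.succ_one_eq_two,
      Fin.reduceSucc, Fin.reduceEq, Matrix.cons_val_zero, Matrix.cons_val_one, Matrix.cons_val,
      Nat.reduceAdd, Nat.cast_ofNat, CharP.cast_eq_zero, ↓reduceIte, one_ne_zero, zero_ne_one,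
      zero_add, add_zero, one_mul] at h
    rw [horbit ![4,2,0,0] ![4,0,2,0] (by decide), horbit ![4,2,0,0] ![4,0,0,2] (by decide), h6] at h
    linarith
  have h222 : c ![2,2,2,0] = 0 := by
    have h := hharm ![2,2,0,0]
    simp only [Fin.sum_univ_four, Matrix.cons_add, Matrix.empty_add_empty, Pi.single_apply,
      Matrix.vecHead, Matrix.vecTail, Function.comp_apply, Fin.succ_zero_eq_one, Fin.succ_one_eq_two,
      Fin.reduceSucc, Fin.reduceEq, Matrix.cons_val_zero, Matrix.cons_val_one, Matrix.cons_val,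
      Nat.reduceAdd, Nat.cast_ofNat, CharP.cast_eq_zero, ↓reduceIte, one_ne_zero, zero_ne_one,
      zero_add, add_zero, one_mul] at h
    rw [horbit ![4,2,0,0] ![2,4,0,0] (by decide), horbit ![2,2,2,0] ![2,2,0,2] (by decide), h42]
      at h
    linarith
  by_cases heven : ∀ i, Even (k i)
  · obtain ⟨e, he | he | he⟩ := exists_perm_comp_eq_of_even_of_sum_eq_six k heven hk <;>
      rw [← hperm k e, he] <;> assumption
  · obtain ⟨i, hi⟩ := not_forall.1 heven
    exact hodd k i (Nat.not_even_iff_odd.1 hi)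

theorem eq_zero_of_isHarmonic_of_signed_perm_invariant {Q : MvPolynomial (Fin 4) ℝ}
    (hhom : Q.IsHomogeneous 6) (hharm : IsHarmonic Q)
    (hsign : ∀ i v, eval (Function.update v i (-v i)) Q = eval v Q)
    (hperm : ∀ (e : Equiv.Perm (Fin 4)) v, eval (v ∘ e) Q = eval v Q)
    (he₀ : eval (Pi.single 0 1) Q = 0) : Q = 0 := by
  set c : (Fin 4 → ℕ) → ℝ := fun k => coeff (Finsupp.equivFunOnFinite.symm k) Q with hc
  have hc0 : ∀ k, ∑ i, k i = 6 → c k = 0 := by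
    refine eq_zero_of_sextic_harmonic_relations c ?_ ?_ ?_ ?_
    · intro k i hodd
      exact coeff_eq_zero_of_eval_update_neg (hsign i) hodd
    · intro k e
      show coeff _ Q = coeff _ Q
      rw [← coeff_mapDomain_of_eval_comp (hperm e) (Finsupp.equivFunOnFinite.symm (k ∘ e))]
      congr 1
      ext j
      simp [Finsupp.mapDomain_equiv_apply]
    · intro k
      rw [← hharm.sum_coeff_add_single_two (Finsupp.equivFunOnFinite.symm k)]
      refine Finset.sum_congr rfl fun i _ => ?_
      have : Finsupp.equivFunOnFinite.symm (k + Pi.single i 2)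
          = Finsupp.equivFunOnFinite.symm k + Finsupp.single i 2 := by
        ext j
        simp [Pi.single_apply, Finsupp.single_apply, eq_comm]
      simp [hc, this]
    · have : (![6,0,0,0] : Fin 4 → ℕ) = Pi.single 0 6 := by decide
      simpa [hc, this, hhom.eval_piSingle_one] using he₀
  ext m
  by_cases hm : ∑ i, m i = 6
  · simpa [hc] using hc0 m hm
  · rw [coeff_zero]
    exact hhom.coeff_eq_zero (by rwa [Finsupp.degree_eq_sum])

theorem stmt_14 :
    P6 ≠ 0 ∧ P6.IsHomogeneous 6 ∧ IsHarmonic P6 ∧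
    (∀ σ : (Fin 4 → ℝ) →ₗ[ℝ] (Fin 4 → ℝ),
      (∀ x y, dotp (σ x) (σ y) = dotp x y) → σ '' D4shell 2 = D4shell 2 →
      ∀ v, MvPolynomial.eval (σ v) P6 = MvPolynomial.eval v P6) ∧
    (∀ P : MvPolynomial (Fin 4) ℝ, P.IsHomogeneous 6 → IsHarmonic P →
      (∀ σ : (Fin 4 → ℝ) →ₗ[ℝ] (Fin 4 → ℝ),
        (∀ x y, dotp (σ x) (σ y) = dotp x y) → σ '' D4shell 2 = D4shell 2 →
        ∀ v, MvPolynomial.eval (σ v) P = MvPolynomial.eval v P) →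
      ∃ c : ℝ, P = c • P6) := by
  refine ⟨fun h => by simpa [h] using eval_piSingle_P6, isHomogeneous_P6, isHarmonic_P6,
    fun _ => eval_P6_map, fun P hhom hharm hinv => ?_⟩
  have hinv' : ∀ σ : (Fin 4 → ℝ) →ₗ[ℝ] (Fin 4 → ℝ), (∀ x y, dotp (σ x) (σ y) = dotp x y) →
      σ '' D4shell 2 = D4shell 2 → ∀ v, eval (σ v) (P - eval (Pi.single 0 1) P • P6)
        = eval v (P - eval (Pi.single 0 1) P • P6) := by
    intro σ hσ hshell v
    simp only [map_sub, smul_eval, hinv σ hσ hshell, eval_P6_map hσ hshell]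
  refine ⟨eval (Pi.single 0 1) P, sub_eq_zero.1 (eq_zero_of_isHarmonic_of_signed_perm_invariant
    (hhom.sub ((homogeneousSubmodule _ _ 6).smul_mem _ isHomogeneous_P6))
    (hharm.sub (isHarmonic_P6.smul _))
    (fun i => hinv' (negCoord i) (dotp_negCoord i) (image_negCoord_D4shell 2 i))
    (fun e => hinv' (LinearMap.funLeft ℝ ℝ e) (dotp_funLeft e) (image_funLeft_D4shell 2 e)) ?_)⟩
  simp [smul_eval, eval_piSingle_P6]
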